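/- arXiv:2509.04318 — 3 statements merged into one kernel-verified Lean document; each statement's English description precedes it below -/
import Mathlib

section
/- Let f : ℕ → (0,∞) be injective, X₁,…,X_{n+1} independent exponentials with rates f(1),…,f(n+1), and Sₖ = X₁+⋯+Xₖ. Then P(Sₙ ≤ ℓ < S_{n+1}) = (∏_{k=1}^n f(k)) · Σ_{i=1}^n (∏_{j≠i, 1≤j≤n+1} 1/(f(j)−f(i))) · (e^{−f(i)ℓ} − e^{−f(n+1)ℓ}). -/
open MeasureTheory ProbabilityTheory Real Finset

open scoped ENNReal NNReal

lemma pfd (f : ℕ → ℝ) (s : Finset ℕ) (hne : s.Nonempty)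
    (hinj : ∀ i ∈ s, ∀ j ∈ s, f i = f j → i = j) :
    ∀ x : ℝ, (∀ j ∈ s, x ≠ f j) →
    ∑ i ∈ s, (∏ j ∈ s.erase i, (f j - f i)⁻¹) * (x - f i)⁻¹
      = -∏ j ∈ s, (f j - x)⁻¹ := by
  classical
  induction s using Finset.induction_on with
  | empty => exact absurd hne (by simp)
  | @insert a s ha ih =>
    intro x hx
    have hxa : x ≠ f a := hx a (mem_insert_self a s)
    have hxs : ∀ j ∈ s, x ≠ f j := fun j hj => hx j (mem_insert_of_mem hj)
    have has : ∀ j ∈ s, f a ≠ f j := fun j hj h =>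
      ha (by rw [hinj a (mem_insert_self a s) j (mem_insert_of_mem hj) h]; exact hj)
    have hinj' : ∀ i ∈ s, ∀ j ∈ s, f i = f j → i = j := fun i hi j hj =>
      hinj i (mem_insert_of_mem hi) j (mem_insert_of_mem hj)
    rcases s.eq_empty_or_nonempty with rfl | hs
    · simp only [insert_empty_eq, sum_singleton, erase_singleton, prod_empty, one_mul,
        prod_singleton]
      have : f a - x = -(x - f a) := by ring
      rw [this, inv_neg, neg_neg]
    · rw [sum_insert ha, erase_insert ha]
      have hterm : ∀ i ∈ s, (∏ j ∈ (insert a s).erase i, (f j - f i)⁻¹) * (x - f i)⁻¹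
          = (x - f a)⁻¹ * ((∏ j ∈ s.erase i, (f j - f i)⁻¹) * (f a - f i)⁻¹
            - (∏ j ∈ s.erase i, (f j - f i)⁻¹) * (x - f i)⁻¹) := by
        intro i hi
        have hia : i ≠ a := fun h => ha (h ▸ hi)
        rw [Finset.erase_insert_of_ne hia.symm,
          prod_insert (fun h => ha (Finset.mem_of_mem_erase h))]
        have h1 : f a - f i ≠ 0 := sub_ne_zero.2 (has i hi)
        have h2 : x - f i ≠ 0 := sub_ne_zero.2 (hxs i hi)
        have h3 : x - f a ≠ 0 := sub_ne_zero.2 hxa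
        have key : (f a - f i)⁻¹ * (x - f i)⁻¹
            = (x - f a)⁻¹ * ((f a - f i)⁻¹ - (x - f i)⁻¹) := by
          field_simp
          ring
        linear_combination (∏ j ∈ s.erase i, (f j - f i)⁻¹) * key
      rw [sum_congr rfl hterm, ← mul_sum, sum_sub_distrib, ih hs hinj' x hxs,
        ih hs hinj' (f a) has, prod_insert ha]
      have : f a - x = -(x - f a) := by ring
      rw [this, inv_neg]
      ring

lemma scalar_id (a lam r E Er El : ℝ) (h1 : r ≠ a) (h2 : lam ≠ a) (h3 : lam ≠ r) :
    lam * (lam - r)⁻¹ * ((E - Er) * (r - a)⁻¹ - (E - El) * (lam - a)⁻¹)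
      = lam * ((lam - a)⁻¹ * (E - Er) * (r - a)⁻¹)
        + lam * (lam - r)⁻¹ * (El - Er) * (lam - a)⁻¹ := by
  have h1' : r - a ≠ 0 := sub_ne_zero.2 h1
  have h2' : lam - a ≠ 0 := sub_ne_zero.2 h2
  have h3' : lam - r ≠ 0 := sub_ne_zero.2 h3
  field_simp
  ring

lemma alg_step (f : ℕ → ℝ) (E : ℕ → ℝ) (Er : ℝ) (k : ℕ) (hk : 1 ≤ k)
    (hd : ∀ i ∈ Finset.Icc 1 (k+1), ∀ j ∈ Finset.Icc 1 (k+1), f i = f j → i = j)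
    (r : ℝ) (hr : ∀ j ∈ Finset.Icc 1 (k+1), r ≠ f j) :
    (∏ j ∈ Finset.Icc 1 (k+1), f j) *
      ∑ i ∈ Finset.Icc 1 (k+1), (∏ j ∈ (Finset.Icc 1 (k+1)).erase i, (f j - f i)⁻¹)
        * (E i - Er) * (r - f i)⁻¹
    = f (k+1) / (f (k+1) - r) *
      ((∏ j ∈ Finset.Icc 1 k, f j) * (∑ i ∈ Finset.Icc 1 k,
          (∏ j ∈ (Finset.Icc 1 k).erase i, (f j - f i)⁻¹) * (E i - Er) * (r - f i)⁻¹)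
       - (∏ j ∈ Finset.Icc 1 k, f j) * (∑ i ∈ Finset.Icc 1 k,
          (∏ j ∈ (Finset.Icc 1 k).erase i, (f j - f i)⁻¹) * (E i - E (k+1)) * (f (k+1) - f i)⁻¹)) := by
  classical
  set s := Finset.Icc 1 k with hs
  have hb : k+1 ∉ s := by simp [hs, mem_Icc]
  have hIcc : Finset.Icc 1 (k+1) = insert (k+1) s := (Finset.insert_Icc_right_eq_Icc_add_one (by omega)).symm
  have hsne : s.Nonempty := ⟨1, by simp [hs, mem_Icc, hk]⟩
  have hmem : ∀ i ∈ s, i ∈ Finset.Icc 1 (k+1) := by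
    intro i hi; rw [hIcc]; exact mem_insert_of_mem hi
  have hbmem : (k+1) ∈ Finset.Icc 1 (k+1) := by simp
  have hlam_ne : ∀ i ∈ s, f (k+1) ≠ f i := fun i hi h =>
    hb (hd (k+1) hbmem i (hmem i hi) h ▸ hi)
  have hpfd := pfd f s hsne
    (fun i hi j hj => hd i (hmem i hi) j (hmem j hj)) (f (k+1)) (fun j hj => hlam_ne j hj)
  -- rewrite LHS
  rw [hIcc, prod_insert hb, sum_insert hb, erase_insert hb]
  have hterm : ∀ i ∈ s, (∏ j ∈ (insert (k+1) s).erase i, (f j - f i)⁻¹) * (E i - Er) * (r - f i)⁻¹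
      = ((f (k+1) - f i)⁻¹ * ∏ j ∈ s.erase i, (f j - f i)⁻¹) * (E i - Er) * (r - f i)⁻¹ := by
    intro i hi
    have hia : i ≠ k+1 := fun h => hb (h ▸ hi)
    rw [Finset.erase_insert_of_ne hia.symm,
      prod_insert (fun h => hb (Finset.mem_of_mem_erase h))]
  rw [sum_congr rfl hterm]
  -- rewrite RHS sums using scalar_id
  have hkey : ∀ i ∈ s,
      f (k+1) * (f (k+1) - r)⁻¹ * ((∏ j ∈ s.erase i, (f j - f i)⁻¹) * (E i - Er) * (r - f i)⁻¹
          - (∏ j ∈ s.erase i, (f j - f i)⁻¹) * (E i - E (k+1)) * (f (k+1) - f i)⁻¹)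
        = f (k+1) * (((f (k+1) - f i)⁻¹ * ∏ j ∈ s.erase i, (f j - f i)⁻¹) * (E i - Er) * (r - f i)⁻¹)
          + (f (k+1) * (f (k+1) - r)⁻¹ * (E (k+1) - Er))
            * ((∏ j ∈ s.erase i, (f j - f i)⁻¹) * (f (k+1) - f i)⁻¹) := by
    intro i hi
    have := scalar_id (f i) (f (k+1)) r (E i) Er (E (k+1))
      (hr i (hmem i hi)) (hlam_ne i hi) (fun h => hr (k+1) hbmem h.symm)
    linear_combination (∏ j ∈ s.erase i, (f j - f i)⁻¹) * this
  have H : ∑ i ∈ s, (f (k+1) * (f (k+1) - r)⁻¹ *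
        ((∏ j ∈ s.erase i, (f j - f i)⁻¹) * (E i - Er) * (r - f i)⁻¹
          - (∏ j ∈ s.erase i, (f j - f i)⁻¹) * (E i - E (k+1)) * (f (k+1) - f i)⁻¹))
      = (∑ i ∈ s, f (k+1) * (((f (k+1) - f i)⁻¹ * ∏ j ∈ s.erase i, (f j - f i)⁻¹)
            * (E i - Er) * (r - f i)⁻¹))
        + ∑ i ∈ s, (f (k+1) * (f (k+1) - r)⁻¹ * (E (k+1) - Er))
            * ((∏ j ∈ s.erase i, (f j - f i)⁻¹) * (f (k+1) - f i)⁻¹) := by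
    rw [← sum_add_distrib]
    exact sum_congr rfl hkey
  rw [← mul_sum, ← mul_sum, ← mul_sum, hpfd, sum_sub_distrib] at H
  have hneg : (r - f (k+1))⁻¹ = -((f (k+1) - r)⁻¹) := by rw [← inv_neg, neg_sub]
  rw [hneg, div_eq_mul_inv]
  linear_combination (-(∏ x ∈ s, f x)) * H

noncomputable def gfun (ℓ r s : ℝ) : ℝ := if s ≤ ℓ then Real.exp (-(r * (ℓ - s))) else 0

lemma gfun_meas (ℓ r : ℝ) : Measurable (gfun ℓ r) := by
  unfold gfun
  exact Measurable.ite measurableSet_Iic (by fun_prop) measurable_const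

lemma gfun_nonneg (ℓ r s : ℝ) : 0 ≤ gfun ℓ r s := by
  unfold gfun; split_ifs
  · exact (Real.exp_pos _).le
  · exact le_refl 0

lemma gfun_le_one (ℓ : ℝ) {r : ℝ} (hr : 0 ≤ r) (s : ℝ) : gfun ℓ r s ≤ 1 := by
  unfold gfun; split_ifs with h
  · exact Real.exp_le_one_iff.2 (by nlinarith)
  · exact zero_le_one

lemma gfun_norm_le (ℓ : ℝ) {r : ℝ} (hr : 0 ≤ r) (s : ℝ) : ‖gfun ℓ r s‖ ≤ 1 := by
  rw [Real.norm_eq_abs, abs_of_nonneg (gfun_nonneg ℓ r s)]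
  exact gfun_le_one ℓ hr s

lemma gfun_integrable {α : Type*} [MeasurableSpace α] (μ : Measure α) [IsFiniteMeasure μ]
    {h : α → ℝ} (hm : AEStronglyMeasurable h μ) (hb : ∀ a, ‖h a‖ ≤ 1) : Integrable h μ :=
  (integrable_const 1).mono' hm (Filter.Eventually.of_forall hb)

lemma expMeasure_tail {r t : ℝ} (hr : 0 < r) (ht : 0 ≤ t) :
    expMeasure r {x | t < x} = ENNReal.ofReal (Real.exp (-(r * t))) := by
  have hpm : IsProbabilityMeasure (expMeasure r) := isProbabilityMeasure_expMeasure hr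
  have h1 : expMeasure r (Set.Iic t) = ENNReal.ofReal (1 - Real.exp (-(r * t))) := by
    rw [expMeasure, gammaMeasure, withDensity_apply _ measurableSet_Iic]
    have hpdf : gammaPDF 1 r = exponentialPDF r := rfl
    rw [hpdf, lintegral_exponentialPDF_eq_antiDeriv hr t, if_pos ht]
  have h2 : {x : ℝ | t < x} = (Set.Iic t)ᶜ := by ext x; simp
  have h3 : 0 ≤ 1 - Real.exp (-(r * t)) := by
    have : Real.exp (-(r * t)) ≤ 1 := Real.exp_le_one_iff.2 (by nlinarith)
    linarith
  rw [h2, measure_compl measurableSet_Iic (measure_ne_top _ _), measure_univ, h1,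
    ← ENNReal.ofReal_one, ← ENNReal.ofReal_sub _ h3]
  norm_num

lemma exponentialPDFReal_eq (r x : ℝ) :
    exponentialPDFReal r x = if 0 ≤ x then r * Real.exp (-(r * x)) else 0 := by
  rw [exponentialPDFReal, gammaPDFReal]
  simp only [rpow_one, Real.Gamma_one, div_one, sub_self, rpow_zero, mul_one]

lemma integral_gfun_exp (ℓ r lam s : ℝ) (hr : 0 < r) (hlam : 0 < lam) (hne : lam ≠ r) :
    ∫ x, gfun ℓ r (s + x) ∂(expMeasure lam)
      = lam * (lam - r)⁻¹ * (gfun ℓ r s - gfun ℓ lam s) := by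
  have hrepr : expMeasure lam
      = MeasureTheory.volume.withDensity
          (fun x => ((Real.toNNReal (exponentialPDFReal lam x) : ℝ≥0) : ℝ≥0∞)) := rfl
  have hmeas : Measurable (fun x => Real.toNNReal (exponentialPDFReal lam x)) :=
    (measurable_exponentialPDFReal lam).real_toNNReal
  rw [hrepr, integral_withDensity_eq_integral_smul hmeas]
  have hsmul : ∀ x : ℝ, (Real.toNNReal (exponentialPDFReal lam x)) • gfun ℓ r (s + x)
      = exponentialPDFReal lam x * gfun ℓ r (s + x) := by
    intro x
    rw [NNReal.smul_def, Real.coe_toNNReal _ (exponentialPDFReal_nonneg hlam x), smul_eq_mul]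
  simp only [hsmul]
  by_cases hsl : s ≤ ℓ
  · have hu : 0 ≤ ℓ - s := by linarith
    have heq : (fun x => exponentialPDFReal lam x * gfun ℓ r (s + x))
        = Set.indicator (Set.Icc 0 (ℓ - s))
            (fun x => lam * Real.exp (-(lam * x)) * Real.exp (-(r * (ℓ - s - x)))) := by
      funext x
      rw [exponentialPDFReal_eq]
      unfold gfun
      by_cases hx0 : 0 ≤ x
      · by_cases hxu : x ≤ ℓ - s
        · rw [if_pos hx0, if_pos (by linarith : s + x ≤ ℓ),
            Set.indicator_of_mem (Set.mem_Icc.2 ⟨hx0, hxu⟩)]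
          ring_nf
        · rw [if_pos hx0, if_neg (by linarith : ¬ s + x ≤ ℓ),
            Set.indicator_of_notMem (fun h => hxu (Set.mem_Icc.1 h).2)]
          ring
      · rw [if_neg hx0, Set.indicator_of_notMem (fun h => hx0 (Set.mem_Icc.1 h).1)]
        ring
    rw [heq, MeasureTheory.integral_indicator measurableSet_Icc,
      MeasureTheory.integral_Icc_eq_integral_Ioc, ← intervalIntegral.integral_of_le hu]
    have hint : ∀ x : ℝ, lam * Real.exp (-(lam * x)) * Real.exp (-(r * (ℓ - s - x)))
        = (lam * Real.exp (-(r * (ℓ - s)))) * Real.exp (x * (r - lam)) := by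
      intro x
      rw [mul_assoc, ← Real.exp_add, mul_assoc, ← Real.exp_add]
      congr 1
      ring
    simp only [hint]
    rw [intervalIntegral.integral_const_mul, intervalIntegral.integral_comp_mul_right
      (fun y => Real.exp y) (sub_ne_zero.2 (fun h => hne h.symm)), zero_mul,
      integral_exp]
    have hexp : Real.exp (-(r * (ℓ - s))) * Real.exp ((ℓ - s) * (r - lam))
        = Real.exp (-(lam * (ℓ - s))) := by
      rw [← Real.exp_add]; congr 1; ring
    unfold gfun
    rw [if_pos hsl, if_pos hsl]
    have hrl : (r - lam)⁻¹ = -((lam - r)⁻¹) := by rw [← inv_neg, neg_sub]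
    rw [smul_eq_mul, hrl, Real.exp_zero]
    linear_combination (-(lam * (lam - r)⁻¹)) * hexp
  · have heq : (fun x => exponentialPDFReal lam x * gfun ℓ r (s + x)) = fun _ => (0:ℝ) := by
      funext x
      rw [exponentialPDFReal_eq]
      unfold gfun
      by_cases hx0 : 0 ≤ x
      · rw [if_pos hx0, if_neg (by intro h; exact hsl (by linarith))]
        ring
      · rw [if_neg hx0]
        ring
    rw [heq]
    unfold gfun
    rw [if_neg hsl, if_neg hsl]
    simp

lemma step_rec {Ω : Type*} [MeasurableSpace Ω] (P : Measure Ω) [IsProbabilityMeasure P]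
    (U V : Ω → ℝ) (hU : Measurable U) (hV : Measurable V) (hUV : IndepFun U V P)
    (lam : ℝ) (hlam : 0 < lam) (hlaw : P.map V = expMeasure lam)
    (ℓ r : ℝ) (hr : 0 < r) (hne : lam ≠ r) :
    ∫ ω, gfun ℓ r (U ω + V ω) ∂P
      = lam * (lam - r)⁻¹ * ((∫ ω, gfun ℓ r (U ω) ∂P) - ∫ ω, gfun ℓ lam (U ω) ∂P) := by
  have hprobE : IsProbabilityMeasure (expMeasure lam) := isProbabilityMeasure_expMeasure hlam
  have hprobU : IsProbabilityMeasure (P.map U) := Measure.isProbabilityMeasure_map hU.aemeasurable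
  have hmap : P.map (fun ω => (U ω, V ω)) = (P.map U).prod (P.map V) :=
    (indepFun_iff_map_prod_eq_prod_map_map hU.aemeasurable hV.aemeasurable).1 hUV
  have hmeas_add : Measurable (fun p : ℝ × ℝ => gfun ℓ r (p.1 + p.2)) :=
    (gfun_meas ℓ r).comp (measurable_fst.add measurable_snd)
  have h1 : ∫ ω, gfun ℓ r (U ω + V ω) ∂P
      = ∫ p : ℝ × ℝ, gfun ℓ r (p.1 + p.2) ∂(P.map (fun ω => (U ω, V ω))) :=
    (integral_map (hU.prodMk hV).aemeasurable hmeas_add.aestronglyMeasurable).symm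
  rw [h1, hmap, hlaw]
  rw [integral_prod _ (gfun_integrable _ hmeas_add.aestronglyMeasurable
    (fun p => gfun_norm_le ℓ hr.le _))]
  have h2 : ∀ u : ℝ, ∫ v, gfun ℓ r (u + v) ∂(expMeasure lam)
      = lam * (lam - r)⁻¹ * (gfun ℓ r u - gfun ℓ lam u) :=
    fun u => integral_gfun_exp ℓ r lam u hr hlam hne
  simp only [h2]
  rw [integral_const_mul, integral_sub
    (gfun_integrable _ ((gfun_meas ℓ r).aestronglyMeasurable) (fun u => gfun_norm_le ℓ hr.le u))
    (gfun_integrable _ ((gfun_meas ℓ lam).aestronglyMeasurable) (fun u => gfun_norm_le ℓ hlam.le u)),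
    integral_map hU.aemeasurable (gfun_meas ℓ r).aestronglyMeasurable,
    integral_map hU.aemeasurable (gfun_meas ℓ lam).aestronglyMeasurable]

lemma prob_eq {Ω : Type*} [MeasurableSpace Ω] (P : Measure Ω) [IsProbabilityMeasure P]
    (U V : Ω → ℝ) (hU : Measurable U) (hV : Measurable V) (hUV : IndepFun U V P)
    (r : ℝ) (hr : 0 < r) (hlaw : P.map V = expMeasure r) (ℓ : ℝ) :
    (P {ω | U ω ≤ ℓ ∧ ℓ < U ω + V ω}).toReal = ∫ ω, gfun ℓ r (U ω) ∂P := by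
  have hprobE : IsProbabilityMeasure (expMeasure r) := isProbabilityMeasure_expMeasure hr
  have hprobU : IsProbabilityMeasure (P.map U) := Measure.isProbabilityMeasure_map hU.aemeasurable
  have hmap : P.map (fun ω => (U ω, V ω)) = (P.map U).prod (P.map V) :=
    (indepFun_iff_map_prod_eq_prod_map_map hU.aemeasurable hV.aemeasurable).1 hUV
  have hE : MeasurableSet {p : ℝ × ℝ | p.1 ≤ ℓ ∧ ℓ < p.1 + p.2} := by
    apply MeasurableSet.inter
    · exact measurable_fst measurableSet_Iic
    · exact measurableSet_lt measurable_const (measurable_fst.add measurable_snd)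
  have h0 : P {ω | U ω ≤ ℓ ∧ ℓ < U ω + V ω}
      = (P.map (fun ω => (U ω, V ω))) {p : ℝ × ℝ | p.1 ≤ ℓ ∧ ℓ < p.1 + p.2} := by
    rw [Measure.map_apply (hU.prodMk hV) hE]
    rfl
  rw [h0, hmap, hlaw, Measure.prod_apply hE]
  have h2 : ∀ u : ℝ, (expMeasure r) (Prod.mk u ⁻¹' {p : ℝ × ℝ | p.1 ≤ ℓ ∧ ℓ < p.1 + p.2})
      = ENNReal.ofReal (gfun ℓ r u) := by
    intro u
    by_cases hu : u ≤ ℓ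
    · have hset : Prod.mk u ⁻¹' {p : ℝ × ℝ | p.1 ≤ ℓ ∧ ℓ < p.1 + p.2} = {x | ℓ - u < x} := by
        ext x
        simp only [Set.mem_preimage, Set.mem_setOf_eq]
        constructor
        · rintro ⟨-, h⟩; linarith
        · intro h; exact ⟨hu, by linarith⟩
      rw [hset, expMeasure_tail hr (by linarith)]
      unfold gfun
      rw [if_pos hu]
    · have hset : Prod.mk u ⁻¹' {p : ℝ × ℝ | p.1 ≤ ℓ ∧ ℓ < p.1 + p.2} = ∅ := by
        ext x
        simp only [Set.mem_preimage, Set.mem_setOf_eq, Set.mem_empty_iff_false, iff_false]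
        rintro ⟨h, -⟩; exact hu h
      rw [hset]
      unfold gfun
      rw [if_neg hu]
      simp
  simp only [h2]
  rw [← integral_eq_lintegral_of_nonneg_ae
      (Filter.Eventually.of_forall (fun u => gfun_nonneg ℓ r u))
      (gfun_meas ℓ r).aestronglyMeasurable,
    integral_map hU.aemeasurable (gfun_meas ℓ r).aestronglyMeasurable]


/-- For independent exponentials X₁,…,X_{n+1} with pairwise distinct rates
f(1),…,f(n+1), the probability that the n-th partial sum is ≤ ℓ while the
(n+1)-st partial sum exceeds ℓ. -/
theorem prob_partial_sum_straddles
    {Ω : Type*} [MeasurableSpace Ω] (P : Measure Ω) [IsProbabilityMeasure P]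
    (n : ℕ) (hn : 1 ≤ n) (f : ℕ → ℝ) (hf_pos : ∀ i, 0 < f i)
    (hf_inj : Function.Injective f)
    (X : ℕ → Ω → ℝ) (hX_meas : ∀ i, Measurable (X i))
    (h_indep : iIndepFun (m := fun _ => inferInstance) X P)
    (h_law : ∀ i : ℕ, Measure.map (X i) P = expMeasure (f (i + 1)))
    (ℓ : ℝ) (hℓ : 0 ≤ ℓ) :
    (P {ω | (∑ i ∈ Finset.range n, X i ω) ≤ ℓ ∧
            ℓ < ∑ i ∈ Finset.range (n + 1), X i ω}).toReal
      = (∏ k ∈ Finset.Icc 1 n, f k) *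
          ∑ i ∈ Finset.Icc 1 n,
            (∏ j ∈ (Finset.Icc 1 (n + 1)).erase i, 1 / (f j - f i)) *
              (Real.exp (-(f i) * ℓ) - Real.exp (-(f (n + 1)) * ℓ)) := by
  classical
  set S : ℕ → Ω → ℝ := fun k ω => ∑ i ∈ Finset.range k, X i ω with hS
  have hS_meas : ∀ k, Measurable (S k) := fun k =>
    Finset.measurable_sum _ (fun i _ => hX_meas i)
  have hindep : ∀ k, IndepFun (S k) (X k) P := by
    intro k
    have h := h_indep.indepFun_sum_range_succ hX_meas k
    have hfe : (∑ j ∈ Finset.range k, X j) = S k := by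
      funext ω
      simp [hS, Finset.sum_apply]
    rwa [hfe] at h
  have hrec : ∀ k r, 0 < r → f (k+1) ≠ r →
      ∫ ω, gfun ℓ r (S (k+1) ω) ∂P
        = f (k+1) * (f (k+1) - r)⁻¹ *
            ((∫ ω, gfun ℓ r (S k ω) ∂P) - ∫ ω, gfun ℓ (f (k+1)) (S k ω) ∂P) := by
    intro k r hr hne
    have hSX : ∀ ω, S (k+1) ω = S k ω + X k ω := fun ω => Finset.sum_range_succ _ _
    simp only [hSX]
    exact step_rec P (S k) (X k) (hS_meas k) (hX_meas k) (hindep k)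
      (f (k+1)) (hf_pos (k+1)) (h_law k) ℓ r hr hne
  have hbase : ∀ r : ℝ, ∫ ω, gfun ℓ r (S 0 ω) ∂P = Real.exp (-(r * ℓ)) := by
    intro r
    have h0 : ∀ ω, S 0 ω = 0 := fun ω => by simp [hS]
    simp only [h0]
    unfold gfun
    rw [if_pos hℓ, sub_zero, integral_const, probReal_univ, one_smul]
  have hclosed : ∀ k, 1 ≤ k → ∀ r : ℝ, 0 < r → (∀ j ∈ Finset.Icc 1 k, r ≠ f j) →
      ∫ ω, gfun ℓ r (S k ω) ∂P
        = (∏ j ∈ Finset.Icc 1 k, f j) * ∑ i ∈ Finset.Icc 1 k,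
            (∏ j ∈ (Finset.Icc 1 k).erase i, (f j - f i)⁻¹) *
              (Real.exp (-(f i * ℓ)) - Real.exp (-(r * ℓ))) * (r - f i)⁻¹ := by
    intro k hk
    induction k, hk using Nat.le_induction with
    | base =>
      intro r hr hrne
      have h1 : f 1 ≠ r := fun h => hrne 1 (by simp) h.symm
      rw [hrec 0 r hr h1, hbase r, hbase (f 1)]
      simp only [Finset.Icc_self, Finset.sum_singleton, Finset.erase_singleton,
        Finset.prod_empty, Finset.prod_singleton, one_mul]
      have hneg : (r - f 1)⁻¹ = -((f 1 - r)⁻¹) := by rw [← inv_neg, neg_sub]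
      rw [hneg]
      ring
    | succ k hk ih =>
      intro r hr hrne
      have hmem : ∀ j ∈ Finset.Icc 1 k, j ∈ Finset.Icc 1 (k+1) := by
        intro j hj
        simp only [Finset.mem_Icc] at hj ⊢
        omega
      have hbmem : k+1 ∈ Finset.Icc 1 (k+1) := by simp
      have hlam_ne : ∀ j ∈ Finset.Icc 1 k, f (k+1) ≠ f j := by
        intro j hj h
        have := hf_inj h
        simp only [Finset.mem_Icc] at hj
        omega
      rw [hrec k r hr (fun h => hrne (k+1) hbmem h.symm),
        ih r hr (fun j hj => hrne j (hmem j hj)),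
        ih (f (k+1)) (hf_pos (k+1)) hlam_ne]
      exact (alg_step f (fun i => Real.exp (-(f i * ℓ))) (Real.exp (-(r * ℓ))) k hk
        (fun i _ j _ h => hf_inj h) r hrne).symm
  have hev : {ω | (∑ i ∈ Finset.range n, X i ω) ≤ ℓ ∧
        ℓ < ∑ i ∈ Finset.range (n + 1), X i ω}
      = {ω | S n ω ≤ ℓ ∧ ℓ < S n ω + X n ω} := by
    ext ω
    simp only [Set.mem_setOf_eq, hS]
    rw [Finset.sum_range_succ]
  rw [hev, prob_eq P (S n) (X n) (hS_meas n) (hX_meas n) (hindep n)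
      (f (n+1)) (hf_pos (n+1)) (h_law n) ℓ]
  have hrne : ∀ j ∈ Finset.Icc 1 n, f (n+1) ≠ f j := by
    intro j hj h
    have := hf_inj h
    simp only [Finset.mem_Icc] at hj
    omega
  rw [hclosed n hn (f (n+1)) (hf_pos (n+1)) hrne]
  congr 1
  apply Finset.sum_congr rfl
  intro i hi
  have hiub : i ≠ n+1 := by
    simp only [Finset.mem_Icc] at hi
    omega
  have hbni : (n+1) ∉ Finset.Icc 1 n := by simp
  have hIcc : Finset.Icc 1 (n+1) = insert (n+1) (Finset.Icc 1 n) :=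
    (Finset.insert_Icc_right_eq_Icc_add_one (by omega)).symm
  have herase : (Finset.Icc 1 (n+1)).erase i
      = insert (n+1) ((Finset.Icc 1 n).erase i) := by
    rw [hIcc, Finset.erase_insert_of_ne (fun h => hiub h.symm)]
  rw [herase, Finset.prod_insert (fun h => hbni (Finset.mem_of_mem_erase h))]
  simp only [one_div, neg_mul]
  ring
end

section
/- Let a ∈ (0,1), X exponential with rate a, Y ~ Gamma(n−1, 1), Z exponential with rate 1, all independent. Then P(X + Y ≤ ℓ < X + Y + Z) = (a / ((1−a)ⁿ (n−1)!)) · e^{−aℓ} · γ(n, (1−a)ℓ), where γ is the lower incomplete gamma function. -/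
open MeasureTheory ProbabilityTheory Real

/-- The lower incomplete gamma function `γ(s,x) = ∫₀ˣ t^(s-1) e^{-t} dt`. -/
noncomputable def lowerIncGamma (s x : ℝ) : ℝ :=
  ∫ t in (0:ℝ)..x, t ^ (s - 1) * Real.exp (-t)

lemma tailExp (c : ℝ) (hc : 0 ≤ c) :
    expMeasure 1 (Set.Ioi c) = ENNReal.ofReal (Real.exp (-c)) := by
  rw [expMeasure, gammaMeasure, withDensity_apply _ measurableSet_Ioi]
  have h1 : ∫⁻ z in Set.Ioi c, gammaPDF 1 1 z
      = ∫⁻ z in Set.Ioi c, ENNReal.ofReal (Real.exp (-z)) := by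
    refine setLIntegral_congr_fun measurableSet_Ioi (fun z hz => ?_)
    have hz0 : (0:ℝ) ≤ z := le_trans hc (le_of_lt hz)
    rw [gammaPDF_of_nonneg hz0]
    norm_num [Real.Gamma_one]
  rw [h1, ← ofReal_integral_eq_lintegral_ofReal]
  · rw [integral_exp_neg_Ioi]
  · have := exp_neg_integrableOn_Ioi c (zero_lt_one (α := ℝ))
    exact (by simpa using this : IntegrableOn (fun x => rexp (-x)) (Set.Ioi c))
  · exact ae_of_all _ fun z => (Real.exp_pos _).le

lemma innerGamma (n : ℕ) (hn : 2 ≤ n) (ℓ x : ℝ) :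
    ∫⁻ y, (if x + y ≤ ℓ then ENNReal.ofReal (Real.exp (x + y - ℓ)) else 0)
        ∂(gammaMeasure ((n:ℝ)-1) 1)
    = ENNReal.ofReal (if x ≤ ℓ then
        Real.exp (x - ℓ) * (ℓ - x)^(n-1) / (Nat.factorial (n-1)) else 0) := by
  have hmg : Measurable fun y : ℝ =>
      (if x + y ≤ ℓ then ENNReal.ofReal (Real.exp (x + y - ℓ)) else 0) := by
    refine Measurable.ite ?_ ?_ measurable_const
    · exact measurableSet_le (by fun_prop) measurable_const
    · fun_prop
  have hpdfm : Measurable (gammaPDF ((n:ℝ)-1) 1) := (measurable_gammaPDFReal _ _).ennreal_ofReal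
  rw [gammaMeasure, lintegral_withDensity_eq_lintegral_mul _ hpdfm hmg]
  by_cases hxl : x ≤ ℓ
  · rw [if_pos hxl]
    set v : ℝ := ℓ - x with hv
    have hv0 : 0 ≤ v := by simp [hv]; linarith
    have hpt : ∀ y : ℝ, (gammaPDF ((n:ℝ)-1) 1 * fun y =>
        (if x + y ≤ ℓ then ENNReal.ofReal (Real.exp (x + y - ℓ)) else 0)) y
        = Set.indicator (Set.Icc 0 v)
            (fun y => ENNReal.ofReal (y^(n-2) * Real.exp (x - ℓ) / Real.Gamma ((n:ℝ)-1))) y := by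
      intro y
      simp only [Pi.mul_apply]
      rcases lt_or_ge y 0 with hy | hy
      · rw [gammaPDF_of_neg hy, zero_mul, Set.indicator_of_notMem (by simp [Set.mem_Icc]; intro; linarith)]
      · rw [gammaPDF_of_nonneg hy]
        by_cases hyl : x + y ≤ ℓ
        · rw [if_pos hyl, Set.indicator_of_mem (by simp [Set.mem_Icc, hy]; linarith)]
          have hG : 0 < Real.Gamma ((n:ℝ)-1) := Real.Gamma_pos_of_pos (by
            have : (2:ℝ) ≤ (n:ℝ) := by exact_mod_cast hn
            linarith)
          rw [← ENNReal.ofReal_mul (by positivity)]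
          congr 1
          have hrp : y ^ ((n:ℝ) - 1 - 1) = y ^ (n-2 : ℕ) := by
            rw [show ((n:ℝ) - 1 - 1) = ((n-2 : ℕ) : ℝ) by rw [Nat.cast_sub hn]; push_cast; ring,
              Real.rpow_natCast]
          rw [hrp, Real.one_rpow, one_mul]
          rw [mul_assoc, ← Real.exp_add, show -y + (x + y - ℓ) = x - ℓ by ring]
          ring
        · rw [if_neg hyl, mul_zero, Set.indicator_of_notMem (by simp [Set.mem_Icc]; intro; linarith)]
    rw [lintegral_congr hpt, lintegral_indicator measurableSet_Icc _]
    rw [← ofReal_integral_eq_lintegral_ofReal]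
    · congr 1
      rw [MeasureTheory.integral_Icc_eq_integral_Ioc, ← intervalIntegral.integral_of_le hv0]
      simp_rw [mul_div_assoc]
      rw [intervalIntegral.integral_mul_const, integral_pow]
      have hfac : Real.Gamma ((n:ℝ)-1) = (Nat.factorial (n-2) : ℝ) := by
        rw [show ((n:ℝ) - 1) = ((n-2 : ℕ) : ℝ) + 1 by rw [Nat.cast_sub (by omega)]; push_cast; ring,
          Real.Gamma_nat_eq_factorial]
      have hn21 : n - 2 + 1 = n - 1 := by omega
      rw [hfac, hn21, zero_pow (by omega : n - 1 ≠ 0), sub_zero]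
      have hc : ((n-2:ℕ):ℝ) + 1 = ((n-1:ℕ):ℝ) := by
        have h' : (n-2)+1 = n-1 := by omega
        exact_mod_cast congrArg (Nat.cast : ℕ → ℝ) h'
      rw [hc]
      have hfac2 : (Nat.factorial (n-1) : ℝ) = ((n-1 : ℕ) : ℝ) * (Nat.factorial (n-2) : ℝ) := by
        rw [show n - 1 = (n-2) + 1 by omega, Nat.factorial_succ]
        push_cast; ring
      have hne1 : ((n-1:ℕ) : ℝ) ≠ 0 := by
        simp; omega
      have hne2 : (Nat.factorial (n-2) : ℝ) ≠ 0 := Nat.cast_ne_zero.2 (Nat.factorial_ne_zero _)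
      rw [hfac2]
      field_simp
    · apply MeasureTheory.IntegrableOn.integrable
      apply Continuous.integrableOn_Icc
      fun_prop
    · refine (ae_restrict_iff' measurableSet_Icc).2 (ae_of_all _ fun y hy => ?_)
      have h0y : 0 ≤ y := hy.1
      have hG : 0 < Real.Gamma ((n:ℝ)-1) := Real.Gamma_pos_of_pos (by
        have : (2:ℝ) ≤ (n:ℝ) := by exact_mod_cast hn
        linarith)
      positivity
  · rw [if_neg hxl]
    have hpt : ∀ y : ℝ, (gammaPDF ((n:ℝ)-1) 1 * fun y =>
        (if x + y ≤ ℓ then ENNReal.ofReal (Real.exp (x + y - ℓ)) else 0)) y = 0 := by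
      intro y
      simp only [Pi.mul_apply]
      rcases lt_or_ge y 0 with hy | hy
      · rw [gammaPDF_of_neg hy, zero_mul]
      · rw [if_neg (by linarith), mul_zero]
    rw [lintegral_congr hpt, lintegral_zero, ENNReal.ofReal_zero]

lemma calcD (a : ℝ) (ha : 0 < a) (ha1 : a < 1) (n : ℕ) (hn : 1 ≤ n) (ℓ : ℝ) (hℓ : 0 < ℓ) :
    ∫ x in (0:ℝ)..ℓ, a * Real.exp (-(a*x)) * (Real.exp (x - ℓ) * (ℓ - x)^(n-1) / (Nat.factorial (n-1)))
    = a / ((1-a)^n * (Nat.factorial (n-1))) * Real.exp (-a*ℓ) * lowerIncGamma n ((1-a)*ℓ) := by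
  set b : ℝ := 1 - a with hbdef
  have hb : 0 < b := by simp [hbdef]; linarith
  have hLIG : lowerIncGamma n (b*ℓ) = ∫ t in (0:ℝ)..(b*ℓ), t^(n-1) * Real.exp (-t) := by
    unfold lowerIncGamma
    have hc : ((n:ℝ) - 1) = ((n-1 : ℕ) : ℝ) := by
      rw [Nat.cast_sub hn]; simp
    simp_rw [hc, Real.rpow_natCast]
  have key : ∀ x:ℝ, a * Real.exp (-(a*x)) * (Real.exp (x - ℓ) * (ℓ - x)^(n-1) / (Nat.factorial (n-1)))
      = (a * Real.exp (-a*ℓ) / ((Nat.factorial (n-1)) * b^(n-1))) * ((b*(ℓ-x))^(n-1) * Real.exp (-(b*(ℓ-x)))) := by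
    intro x
    rw [mul_pow]
    rw [show (-(a*x)) = (-a*ℓ) + (-(b*(ℓ-x))) + -(x - ℓ) by ring, Real.exp_add, Real.exp_add,
      Real.exp_neg (x - ℓ)]
    have h1 : Real.exp (x-ℓ) ≠ 0 := Real.exp_ne_zero _
    have h2 : (b:ℝ)^(n-1) ≠ 0 := pow_ne_zero _ hb.ne'
    have h3 : ((Nat.factorial (n-1)):ℝ) ≠ 0 := Nat.cast_ne_zero.2 (Nat.factorial_ne_zero _)
    field_simp
  simp_rw [key]
  rw [intervalIntegral.integral_const_mul]
  have hcomp1 : ∫ x in (0:ℝ)..ℓ, ((b*(ℓ-x))^(n-1) * Real.exp (-(b*(ℓ-x))))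
      = ∫ x in (0:ℝ)..ℓ, ((b*x)^(n-1) * Real.exp (-(b*x))) := by
    have := intervalIntegral.integral_comp_sub_left (a := (0:ℝ)) (b := ℓ)
      (fun x => (b*x)^(n-1) * Real.exp (-(b*x))) ℓ
    simpa using this
  rw [hcomp1, intervalIntegral.integral_comp_mul_left (fun t => t^(n-1) * Real.exp (-t)) hb.ne']
  rw [mul_zero, smul_eq_mul, ← hLIG]
  have h2 : (b:ℝ)^(n-1) ≠ 0 := pow_ne_zero _ hb.ne'
  have h3 : ((Nat.factorial (n-1)):ℝ) ≠ 0 := Nat.cast_ne_zero.2 (Nat.factorial_ne_zero _)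
  have hbn : b^n = b * b^(n-1) := by
    conv_lhs => rw [show n = 1 + (n-1) by omega]
    rw [pow_add, pow_one]
  rw [hbn]
  field_simp


/-- For `X` exponential with rate `a`, `Y ~ Gamma(n-1,1)` (with `Y = 0` when `n = 1`)
and `Z` exponential with rate 1, all mutually independent,
`P(X + Y ≤ ℓ < X + Y + Z) = (a/((1-a)ⁿ (n-1)!)) e^{-aℓ} γ(n, (1-a)ℓ)`. -/
theorem prob_exp_gamma_exp_straddles
    {Ω : Type*} [MeasurableSpace Ω] (P : Measure Ω) [IsProbabilityMeasure P]
    (a : ℝ) (ha : a ∈ Set.Ioo (0:ℝ) 1) (n : ℕ) (hn : 1 ≤ n) (ℓ : ℝ) (hℓ : 0 < ℓ)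
    (X Y Z : Ω → ℝ) (hX_meas : Measurable X) (hY_meas : Measurable Y)
    (hZ_meas : Measurable Z)
    (h_indep : iIndepFun ![X, Y, Z] P)
    (hX_law : Measure.map X P = expMeasure a)
    (hY_law : if n = 1 then Y = fun _ => 0
      else Measure.map Y P = gammaMeasure ((n : ℝ) - 1) 1)
    (hZ_law : Measure.map Z P = expMeasure 1) :
    (P {ω | X ω + Y ω ≤ ℓ ∧ ℓ < X ω + Y ω + Z ω}).toReal
      = a / ((1 - a) ^ n * (Nat.factorial (n - 1))) * Real.exp (-a * ℓ) *
          lowerIncGamma n ((1 - a) * ℓ) := by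
  obtain ⟨ha0, ha1⟩ := ha
  haveI hPX : IsProbabilityMeasure (expMeasure a) := isProbabilityMeasure_expMeasure ha0
  haveI hPZ : IsProbabilityMeasure (expMeasure 1) := isProbabilityMeasure_expMeasure one_pos
  haveI hPY : IsProbabilityMeasure (P.map Y) := Measure.isProbabilityMeasure_map hY_meas.aemeasurable
  set S : Set ((ℝ × ℝ) × ℝ) :=
    {p : (ℝ×ℝ)×ℝ | p.1.1 + p.1.2 ≤ ℓ ∧ ℓ < p.1.1 + p.1.2 + p.2} with hSdef
  set F : ℝ → ℝ := fun x => if x ≤ ℓ then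
      Real.exp (x - ℓ) * (ℓ - x)^(n-1) / (Nat.factorial (n-1)) else 0 with hFdef
  set g : ℝ → ℝ := fun x =>
      a * Real.exp (-(a*x)) * (Real.exp (x - ℓ) * (ℓ - x)^(n-1) / (Nat.factorial (n-1)))
    with hgdef
  have hmeas : ∀ i, Measurable (![X, Y, Z] i) := by
    intro i; fin_cases i <;> assumption
  have hIndXY : IndepFun X Y P := h_indep.indepFun (show (0:Fin 3) ≠ 1 by decide)
  have hIndXYZ : IndepFun (fun ω => (X ω, Y ω)) Z P :=
    h_indep.indepFun_prodMk hmeas 0 1 2 (by decide) (by decide)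
  have hmapXY : P.map (fun ω => (X ω, Y ω)) = (expMeasure a).prod (P.map Y) := by
    rw [(indepFun_iff_map_prod_eq_prod_map_map hX_meas.aemeasurable
      hY_meas.aemeasurable).1 hIndXY, hX_law]
  have hmap : P.map (fun ω => ((X ω, Y ω), Z ω))
      = ((expMeasure a).prod (P.map Y)).prod (expMeasure 1) := by
    rw [(indepFun_iff_map_prod_eq_prod_map_map (hX_meas.prodMk hY_meas).aemeasurable
      hZ_meas.aemeasurable).1 hIndXYZ, hmapXY, hZ_law]
  have hS : MeasurableSet S := by
    have h1 : MeasurableSet {p : (ℝ×ℝ)×ℝ | p.1.1 + p.1.2 ≤ ℓ} :=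
      measurableSet_le (measurable_fst.fst.add measurable_fst.snd) measurable_const
    have h2 : MeasurableSet {p : (ℝ×ℝ)×ℝ | ℓ < p.1.1 + p.1.2 + p.2} :=
      measurableSet_lt measurable_const
        ((measurable_fst.fst.add measurable_fst.snd).add measurable_snd)
    exact h1.inter h2
  have hev : P {ω | X ω + Y ω ≤ ℓ ∧ ℓ < X ω + Y ω + Z ω}
      = (((expMeasure a).prod (P.map Y)).prod (expMeasure 1)) S := by
    rw [← hmap, Measure.map_apply (by fun_prop) hS]
    rfl
  have h4 : ∀ p : ℝ × ℝ, expMeasure 1 (Prod.mk p ⁻¹' S)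
      = if p.1 + p.2 ≤ ℓ then ENNReal.ofReal (Real.exp (p.1 + p.2 - ℓ)) else 0 := by
    intro p
    by_cases h : p.1 + p.2 ≤ ℓ
    · have hpre : Prod.mk p ⁻¹' S = Set.Ioi (ℓ - (p.1 + p.2)) := by
        ext z
        simp only [hSdef, Set.mem_preimage, Set.mem_setOf_eq, Set.mem_Ioi]
        constructor
        · rintro ⟨-, h2⟩; linarith
        · intro hz; exact ⟨h, by linarith⟩
      rw [hpre, tailExp _ (by linarith), if_pos h, neg_sub]
    · have hpre : Prod.mk p ⁻¹' S = (∅ : Set ℝ) := by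
        ext z
        simp only [hSdef, Set.mem_preimage, Set.mem_setOf_eq, Set.mem_empty_iff_false,
          iff_false, not_and]
        intro h'; exact absurd h' h
      rw [hpre, measure_empty, if_neg h]
  have hfm : Measurable (fun p : ℝ × ℝ =>
      if p.1 + p.2 ≤ ℓ then ENNReal.ofReal (Real.exp (p.1 + p.2 - ℓ)) else 0) := by
    refine Measurable.ite (measurableSet_le (by fun_prop) measurable_const) (by fun_prop)
      measurable_const
  have hInner : ∀ x : ℝ, (∫⁻ y, (if x + y ≤ ℓ then ENNReal.ofReal (Real.exp (x + y - ℓ))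
      else 0) ∂(P.map Y)) = ENNReal.ofReal (F x) := by
    intro x
    rcases eq_or_ne n 1 with h1 | h1
    · rw [if_pos h1] at hY_law
      rw [hY_law, Measure.map_const, measure_univ, one_smul, lintegral_dirac' _ (by
        refine Measurable.ite (measurableSet_le (by fun_prop) measurable_const) (by fun_prop)
          measurable_const)]
      rw [hFdef]
      simp only [h1]
      by_cases hx : x ≤ ℓ <;> simp [hx]
    · rw [if_neg h1] at hY_law
      rw [hY_law, innerGamma n (by omega) ℓ x, hFdef]
  have hpdfm : Measurable (gammaPDF 1 a) := (measurable_gammaPDFReal _ _).ennreal_ofReal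
  have hFm : Measurable fun x => ENNReal.ofReal (F x) := by
    apply Measurable.ennreal_ofReal
    rw [hFdef]
    refine Measurable.ite (measurableSet_le (by fun_prop) measurable_const) (by fun_prop)
      measurable_const
  have hpt : ∀ x : ℝ, (gammaPDF 1 a * fun x => ENNReal.ofReal (F x)) x
      = ENNReal.ofReal (Set.indicator (Set.Icc 0 ℓ) g x) := by
    intro x
    simp only [Pi.mul_apply]
    rcases lt_or_ge x 0 with hx | hx
    · rw [gammaPDF_of_neg hx, zero_mul,
        Set.indicator_of_notMem (by simp [Set.mem_Icc]; intro; linarith), ENNReal.ofReal_zero]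
    · rw [gammaPDF_of_nonneg hx]
      by_cases hxl : x ≤ ℓ
      · rw [Set.indicator_of_mem (Set.mem_Icc.2 ⟨hx, hxl⟩), hFdef]
        simp only [if_pos hxl]
        rw [← ENNReal.ofReal_mul (by positivity)]
        congr 1
        rw [hgdef]
        simp only [sub_self, Real.rpow_zero, Real.rpow_one, Real.Gamma_one]
        ring
      · rw [hFdef]
        simp only [if_neg hxl]
        rw [ENNReal.ofReal_zero, mul_zero,
          Set.indicator_of_notMem (by simp [Set.mem_Icc]; intro; linarith), ENNReal.ofReal_zero]
  have hgnn : ∀ x ∈ Set.Icc (0:ℝ) ℓ, 0 ≤ g x := by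
    intro x hx
    have h1 : x ≤ ℓ := hx.2
    have h2 : (0:ℝ) ≤ ℓ - x := by linarith
    rw [hgdef]
    have : (0:ℝ) ≤ (ℓ - x)^(n-1) := pow_nonneg h2 _
    positivity
  have hNN : 0 ≤ᵐ[volume] Set.indicator (Set.Icc 0 ℓ) g :=
    ae_of_all _ (Set.indicator_nonneg hgnn)
  have hInt : Integrable (Set.indicator (Set.Icc 0 ℓ) g) volume := by
    apply MeasureTheory.IntegrableOn.integrable_indicator _ measurableSet_Icc
    apply Continuous.integrableOn_Icc
    rw [hgdef]; fun_prop
  have hkey : (((expMeasure a).prod (P.map Y)).prod (expMeasure 1)) S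
      = ENNReal.ofReal (∫ x, Set.indicator (Set.Icc 0 ℓ) g x) := by
    calc (((expMeasure a).prod (P.map Y)).prod (expMeasure 1)) S
        = ∫⁻ p, expMeasure 1 (Prod.mk p ⁻¹' S) ∂((expMeasure a).prod (P.map Y)) :=
          Measure.prod_apply hS
      _ = ∫⁻ p : ℝ × ℝ, (if p.1 + p.2 ≤ ℓ then ENNReal.ofReal (Real.exp (p.1 + p.2 - ℓ))
            else 0) ∂((expMeasure a).prod (P.map Y)) := lintegral_congr h4
      _ = ∫⁻ x, ∫⁻ y, (if x + y ≤ ℓ then ENNReal.ofReal (Real.exp (x + y - ℓ))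
            else 0) ∂(P.map Y) ∂(expMeasure a) := lintegral_prod _ hfm.aemeasurable
      _ = ∫⁻ x, ENNReal.ofReal (F x) ∂(expMeasure a) := lintegral_congr hInner
      _ = ∫⁻ x, (gammaPDF 1 a * fun x => ENNReal.ofReal (F x)) x ∂volume := by
            rw [expMeasure, gammaMeasure]
            exact lintegral_withDensity_eq_lintegral_mul _ hpdfm hFm
      _ = ∫⁻ x, ENNReal.ofReal (Set.indicator (Set.Icc 0 ℓ) g x) ∂volume :=
          lintegral_congr hpt
      _ = ENNReal.ofReal (∫ x, Set.indicator (Set.Icc 0 ℓ) g x) :=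
          (ofReal_integral_eq_lintegral_ofReal hInt hNN).symm
  rw [hev, hkey, ENNReal.toReal_ofReal (integral_nonneg (Set.indicator_nonneg hgnn))]
  rw [MeasureTheory.integral_indicator measurableSet_Icc,
    MeasureTheory.integral_Icc_eq_integral_Ioc, ← intervalIntegral.integral_of_le hℓ.le]
  exact calcD a ha0 ha1 n hn ℓ hℓ
end

section
/- Let a ∈ (0,1), n ≥ 1 an integer, ℓ ≥ 0, and let D be a geometric random variable with P(D = m) = a(1−a)^m for m ≥ 0. Then (a/((1−a)ⁿ (n−1)!)) · e^{−aℓ} · γ(n, (1−a)ℓ) = E[ e^{−ℓ} · ℓ^{n+D} / (n+D)! ]. -/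
open MeasureTheory Real
open scoped Nat

lemma exp_eq_tsum_real (y : ℝ) : Real.exp y = ∑' k : ℕ, y ^ k / k ! := by
  rw [Real.exp_eq_exp_ℝ, NormedSpace.exp_eq_tsum_div]

lemma integral_pow_mul_exp_neg (m : ℕ) (x : ℝ) :
    ∫ t in (0:ℝ)..x, t ^ m * Real.exp (-t)
      = (m ! : ℝ) - Real.exp (-x) * ∑ k ∈ Finset.range (m + 1), x ^ k * ((m ! : ℝ) / k !) := by
  have key : ∀ y : ℝ, HasDerivAt
      (fun x : ℝ => (m ! : ℝ) - Real.exp (-x) * ∑ k ∈ Finset.range (m + 1), x ^ k * ((m ! : ℝ) / k !))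
      (y ^ m * Real.exp (-y)) y := by
    intro y
    have he : HasDerivAt (fun x : ℝ => Real.exp (-x)) (-Real.exp (-y)) y := by
      simpa [Function.comp_def] using (Real.hasDerivAt_exp (-y)).comp y (hasDerivAt_neg y)
    have hS : HasDerivAt (fun x : ℝ => ∑ k ∈ Finset.range (m + 1), x ^ k * ((m ! : ℝ) / k !))
        (∑ k ∈ Finset.range (m + 1), ((k : ℝ) * y ^ (k - 1)) * ((m ! : ℝ) / k !)) y :=
      HasDerivAt.fun_sum fun k _ => (hasDerivAt_pow k y).mul_const _
    have h2 := (hasDerivAt_const y ((m ! : ℝ))).sub (he.mul hS)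
    have hsum : (∑ k ∈ Finset.range (m + 1), y ^ k * ((m ! : ℝ) / k !))
        - ∑ k ∈ Finset.range (m + 1), ((k : ℝ) * y ^ (k - 1)) * ((m ! : ℝ) / k !) = y ^ m := by
      rw [Finset.sum_range_succ, Finset.sum_range_succ']
      have h0 : ∀ j ∈ Finset.range m,
          (((j + 1 : ℕ) : ℝ) * y ^ ((j + 1) - 1)) * ((m ! : ℝ) / (j + 1)!)
            = y ^ j * ((m ! : ℝ) / j !) := by
        intro j _
        have hj : ((j + 1)! : ℝ) = (j + 1) * j ! := by
          push_cast [Nat.factorial_succ]; ring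
        have hjne : (j ! : ℝ) ≠ 0 := Nat.cast_ne_zero.mpr (Nat.factorial_ne_zero j)
        have hj1 : ((j : ℝ) + 1) ≠ 0 := by positivity
        rw [hj]
        push_cast
        field_simp
      rw [Finset.sum_congr rfl h0]
      have : ((m ! : ℝ) / m !) = 1 :=
        div_self (Nat.cast_ne_zero.mpr (Nat.factorial_ne_zero m))
      simp [this]
    have : y ^ m * Real.exp (-y)
        = 0 - ((-Real.exp (-y)) * (∑ k ∈ Finset.range (m + 1), y ^ k * ((m ! : ℝ) / k !))
          + Real.exp (-y) * ∑ k ∈ Finset.range (m + 1), ((k : ℝ) * y ^ (k - 1)) * ((m ! : ℝ) / k !)) := by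
      have := hsum
      nlinarith [hsum, Real.exp_pos (-y)]
    rw [this]
    exact h2
  have hint : IntervalIntegrable (fun t : ℝ => t ^ m * Real.exp (-t)) volume 0 x :=
    ((continuous_pow m).mul (Real.continuous_exp.comp continuous_neg)).intervalIntegrable 0 x
  have := intervalIntegral.integral_eq_sub_of_hasDerivAt (fun t _ => key t) hint
  rw [this]
  have h0 : ∑ k ∈ Finset.range (m + 1), (0:ℝ) ^ k * ((m ! : ℝ) / k !) = (m ! : ℝ) := by
    rw [Finset.sum_range_succ']
    simp
  rw [h0]
  simp

/-- For `D` geometric with `P(D = m) = a(1-a)^m`,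
`(a/((1-a)ⁿ (n-1)!)) e^{-aℓ} γ(n, (1-a)ℓ) = E[e^{-ℓ} ℓ^{n+D}/(n+D)!]`. -/
theorem incGamma_eq_geometric_expectation
    (a : ℝ) (ha : a ∈ Set.Ioo (0:ℝ) 1) (n : ℕ) (hn : 1 ≤ n) (ℓ : ℝ) (hℓ : 0 ≤ ℓ) :
    a / ((1 - a) ^ n * (Nat.factorial (n - 1))) * Real.exp (-a * ℓ) *
        lowerIncGamma n ((1 - a) * ℓ)
      = ∑' m : ℕ, (a * (1 - a) ^ m) *
          (Real.exp (-ℓ) * ℓ ^ (n + m) / (Nat.factorial (n + m))) := by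
  obtain ⟨ha0, ha1⟩ := ha
  have h1a : (0:ℝ) < 1 - a := by linarith
  set y : ℝ := (1 - a) * ℓ with hy
  -- rewrite the incomplete gamma
  have hcast : ((n : ℝ) - 1) = ((n - 1 : ℕ) : ℝ) := by
    push_cast [Nat.cast_sub hn]; ring
  have hgamma : lowerIncGamma n y
      = ((n-1)! : ℝ) - Real.exp (-y) * ∑ k ∈ Finset.range n,
          y ^ k * (((n-1)! : ℝ) / k !) := by
    have hn1 : (n - 1) + 1 = n := Nat.succ_pred_eq_of_pos hn
    rw [lowerIncGamma]
    simp_rw [hcast, Real.rpow_natCast]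
    rw [integral_pow_mul_exp_neg (n-1) y, hn1]
  -- rewrite the RHS
  have hsummable := Real.summable_pow_div_factorial y
  have htail : ∑' m : ℕ, y ^ (m + n) / (m + n)!
      = Real.exp y - ∑ k ∈ Finset.range n, y ^ k / k ! := by
    have := Summable.sum_add_tsum_nat_add (f := fun k : ℕ => y ^ k / k !) n hsummable
    rw [← exp_eq_tsum_real] at this
    linarith
  have hterm : ∀ m : ℕ, (a * (1 - a) ^ m) *
      (Real.exp (-ℓ) * ℓ ^ (n + m) / (Nat.factorial (n + m)))
        = (a * Real.exp (-ℓ) / (1 - a) ^ n) * (y ^ (m + n) / (m + n)!) := by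
    intro m
    have hne : ((1:ℝ) - a) ^ n ≠ 0 := pow_ne_zero _ (ne_of_gt h1a)
    have hfac : ((n + m)! : ℝ) ≠ 0 := Nat.cast_ne_zero.mpr (Nat.factorial_ne_zero _)
    rw [hy, mul_pow, add_comm m n]
    rw [pow_add (1-a) n m]
    field_simp
  rw [tsum_congr hterm, tsum_mul_left, htail, hgamma]
  -- final algebra
  have hF : ((n-1)! : ℝ) ≠ 0 := Nat.cast_ne_zero.mpr (Nat.factorial_ne_zero _)
  have hne : ((1:ℝ) - a) ^ n ≠ 0 := pow_ne_zero _ (ne_of_gt h1a)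
  have hexp : Real.exp (-a * ℓ) = Real.exp (-ℓ) * Real.exp y := by
    rw [← Real.exp_add, hy]; ring_nf
  have hexpy : Real.exp (-y) = (Real.exp y)⁻¹ := Real.exp_neg y
  have hey : Real.exp y ≠ 0 := (Real.exp_pos y).ne'
  have hFS : ∑ k ∈ Finset.range n, y ^ k * (((n-1)! : ℝ) / k !)
      = ((n-1)! : ℝ) * ∑ k ∈ Finset.range n, y ^ k / k ! := by
    rw [Finset.mul_sum]; exact Finset.sum_congr rfl fun k _ => by ring
  rw [hexp, hexpy, hFS]
  field_simp
end
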